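/- arXiv:2008.08748 — 3 statements merged into one kernel-verified Lean document; each statement's English description precedes it below -/
import Mathlib

section
/- Combining sibling projections (Lemma on late projection): let f : 2^A → ℝ and g : 2^B → ℝ be pseudo-Boolean functions, and let P ⊆ A and Q ⊆ B be finite sets with P ∩ B = ∅ and Q ∩ A = ∅. Then (∃_P f) · (∃_Q g) = ∃_{P ∪ Q} (f · g). -/
/-- The product of pseudo-Boolean functions `f : 2^A → ℝ` and `g : 2^B → ℝ`. -/
def PBmul {V : Type*} [DecidableEq V] (A B : Finset V) (f g : Finset V → ℝ) :
    Finset V → ℝ :=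
  fun τ => f (τ ∩ A) * g (τ ∩ B)

/-- Iterated projection `∃_S f`: `(∃_S f)(τ) = Σ_{σ ⊆ S} f(τ ∪ σ)`. -/
def PBprojSet {V : Type*} [DecidableEq V] (S : Finset V) (f : Finset V → ℝ) :
    Finset V → ℝ :=
  fun τ => ∑ σ ∈ S.powerset, f (τ ∪ σ)

lemma powerset_union_sum {V : Type*} [DecidableEq V] (P Q : Finset V)
    (hPQ : Disjoint P Q) (F : Finset V → ℝ) :
    ∑ σ ∈ (P ∪ Q).powerset, F σ
      = ∑ p ∈ P.powerset ×ˢ Q.powerset, F (p.1 ∪ p.2) := by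
  refine Finset.sum_nbij' (fun σ => (σ ∩ P, σ ∩ Q)) (fun p => p.1 ∪ p.2) ?_ ?_ ?_ ?_ ?_
  · intro σ hσ
    simp [Finset.mem_product, Finset.mem_powerset, Finset.inter_subset_right]
  · intro p hp
    simp only [Finset.mem_product, Finset.mem_powerset] at hp
    simp only [Finset.mem_powerset]
    exact Finset.union_subset_union hp.1 hp.2
  · intro σ hσ
    simp only [Finset.mem_powerset] at hσ
    show σ ∩ P ∪ σ ∩ Q = σ
    rw [← Finset.inter_union_distrib_left]
    exact (Finset.inter_eq_left.mpr hσ)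
  · intro p hp
    simp only [Finset.mem_product, Finset.mem_powerset] at hp
    show ((p.1 ∪ p.2) ∩ P, (p.1 ∪ p.2) ∩ Q) = p
    have h1 : (p.1 ∪ p.2) ∩ P = p.1 := by
      rw [Finset.union_inter_distrib_right, Finset.inter_eq_left.mpr hp.1,
        Finset.disjoint_iff_inter_eq_empty.mp (Finset.disjoint_of_subset_left hp.2 hPQ.symm), Finset.union_empty]
    have h2 : (p.1 ∪ p.2) ∩ Q = p.2 := by
      rw [Finset.union_inter_distrib_right, Finset.inter_eq_left.mpr hp.2,
        Finset.disjoint_iff_inter_eq_empty.mp (Finset.disjoint_of_subset_left hp.1 hPQ), Finset.empty_union]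
    exact Prod.ext h1 h2
  · intro σ hσ
    simp only [Finset.mem_powerset] at hσ
    rw [← Finset.inter_union_distrib_left, Finset.inter_eq_left.mpr hσ]

/-- Combining sibling projections: for `f : 2^A → ℝ`, `g : 2^B → ℝ`, `P ⊆ A`,
`Q ⊆ B` with `P ∩ B = ∅` and `Q ∩ A = ∅`,
`(∃_P f) · (∃_Q g) = ∃_{P ∪ Q} (f · g)` as functions on `2^((A ∪ B) \ (P ∪ Q))`. -/
theorem sibling_projections {V : Type*} [DecidableEq V] (A B P Q : Finset V)
    (f g : Finset V → ℝ) (hP : P ⊆ A) (hQ : Q ⊆ B)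
    (hPB : P ∩ B = ∅) (hQA : Q ∩ A = ∅) :
    ∀ τ ⊆ (A ∪ B) \ (P ∪ Q),
      PBmul (A \ P) (B \ Q) (PBprojSet P f) (PBprojSet Q g) τ
        = PBprojSet (P ∪ Q) (PBmul A B f g) τ := by
  intro τ hτ
  have hPQ : Disjoint P Q := by
    rw [Finset.disjoint_left]
    intro a haP haQ
    have : a ∈ Q ∩ A := Finset.mem_inter.mpr ⟨haQ, hP haP⟩
    simp [hQA] at this
  have hτP : Disjoint τ P := by
    rw [Finset.disjoint_left]; intro a ha haP
    have := hτ ha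
    simp only [Finset.mem_sdiff, Finset.mem_union] at this
    exact this.2 (Or.inl haP)
  have hτQ : Disjoint τ Q := by
    rw [Finset.disjoint_left]; intro a ha haQ
    have := hτ ha
    simp only [Finset.mem_sdiff, Finset.mem_union] at this
    exact this.2 (Or.inr haQ)
  simp only [PBmul, PBprojSet]
  rw [powerset_union_sum P Q hPQ, Finset.sum_product, Finset.sum_mul_sum]
  refine Finset.sum_congr rfl fun σ₁ hσ₁ => Finset.sum_congr rfl fun σ₂ hσ₂ => ?_
  simp only [Finset.mem_powerset] at hσ₁ hσ₂
  have h1 : τ ∩ (A \ P) ∪ σ₁ = (τ ∪ (σ₁ ∪ σ₂)) ∩ A := by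
    ext a
    have e1 : a ∈ σ₁ → a ∈ A := fun h => hP (hσ₁ h)
    have e2 : a ∈ σ₂ → a ∉ A := fun h hA => by
      have : a ∈ Q ∩ A := Finset.mem_inter.mpr ⟨hσ₂ h, hA⟩
      simp [hQA] at this
    have e3 : a ∈ τ → a ∉ P := fun h => Finset.disjoint_left.mp hτP h
    simp only [Finset.mem_union, Finset.mem_inter, Finset.mem_sdiff]
    tauto
  have h2 : τ ∩ (B \ Q) ∪ σ₂ = (τ ∪ (σ₁ ∪ σ₂)) ∩ B := by
    ext a
    have e1 : a ∈ σ₂ → a ∈ B := fun h => hQ (hσ₂ h)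
    have e2 : a ∈ σ₁ → a ∉ B := fun h hB => by
      have : a ∈ P ∩ B := Finset.mem_inter.mpr ⟨hσ₁ h, hB⟩
      simp [hPB] at this
    have e3 : a ∈ τ → a ∉ Q := fun h => Finset.disjoint_left.mp hτQ h
    simp only [Finset.mem_union, Finset.mem_inter, Finset.mem_sdiff]
    tauto
  rw [h1, h2]
end

section
/- In a project-join tree (T, r, γ, π) of a CNF formula φ, if n is an internal node with distinct children o and q, then P(o) ∩ vars(Φ(q) · W_{P(q)}) = ∅, where P(n) is the union of labels π over the subtree rooted at n and Φ(n) is the set of clauses at the leaves of the subtree rooted at n. -/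
variable {V : Type*} [DecidableEq V]

structure Clause (V : Type*) where
  pos : Finset V
  neg : Finset V

def Clause.vars [DecidableEq V] (c : Clause V) : Finset V := c.pos ∪ c.neg

noncomputable def Clause.ind [DecidableEq V] (c : Clause V) (τ : Finset V) : ℝ :=
  if (∃ x ∈ c.pos, x ∈ τ) ∨ (∃ x ∈ c.neg, x ∉ τ) then 1 else 0

inductive PJT (V : Type*) where
  | leaf (c : Clause V)
  | node (lbl : Finset V) (children : List (PJT V))

namespace PJT

def clauses : PJT V → Multiset (Clause V)
  | .leaf c => {c}
  | .node _ cs => (cs.attach.map (fun o => clauses o.1)).sum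
decreasing_by
  have := List.sizeOf_lt_of_mem o.2
  simp only [PJT.node.sizeOf_spec]
  omega

def labels : PJT V → Multiset (Finset V)
  | .leaf _ => 0
  | .node lbl cs => lbl ::ₘ (cs.attach.map (fun o => labels o.1)).sum
decreasing_by
  have := List.sizeOf_lt_of_mem o.2
  simp only [PJT.node.sizeOf_spec]
  omega

def P : PJT V → Finset V
  | .leaf _ => ∅
  | .node lbl cs => lbl ∪ (cs.attach.map (fun o => P o.1)).foldr (· ∪ ·) ∅
decreasing_by
  have := List.sizeOf_lt_of_mem o.2
  simp only [PJT.node.sizeOf_spec]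
  omega

def varsOf : PJT V → Finset V
  | .leaf c => c.vars
  | .node lbl cs => (cs.attach.map (fun o => varsOf o.1)).foldr (· ∪ ·) ∅ \ lbl
decreasing_by
  have := List.sizeOf_lt_of_mem o.2
  simp only [PJT.node.sizeOf_spec]
  omega

def size : PJT V → ℕ
  | .leaf c => c.vars.card
  | .node lbl cs => (varsOf (.node lbl cs) ∪ lbl).card

def width : PJT V → ℕ
  | .leaf c => c.vars.card
  | .node lbl cs =>
      max (size (.node lbl cs)) ((cs.attach.map (fun o => width o.1)).foldr max 0)
decreasing_by
  have := List.sizeOf_lt_of_mem o.2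
  simp only [PJT.node.sizeOf_spec]
  omega

def wProd (W : V → Bool → ℝ) (S : Finset V) (τ : Finset V) : ℝ :=
  ∏ x ∈ S, W x (decide (x ∈ τ))

noncomputable def val (W : V → Bool → ℝ) : PJT V → Finset V → ℝ
  | .leaf c => c.ind
  | .node lbl cs => fun τ =>
      ∑ σ ∈ lbl.powerset,
        (cs.attach.map (fun o => val W o.1 ((τ ∪ σ) ∩ varsOf o.1))).prod
          * wProd W lbl (τ ∪ σ)
decreasing_by
  have := List.sizeOf_lt_of_mem o.2
  simp only [PJT.node.sizeOf_spec]
  omega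

inductive Subtree : PJT V → PJT V → Prop
  | refl (t : PJT V) : Subtree t t
  | child {s c : PJT V} {lbl : Finset V} {cs : List (PJT V)} :
      c ∈ cs → Subtree s c → Subtree s (.node lbl cs)

end PJT

def Formula.vars (φ : Finset (Clause V)) : Finset V := φ.sup Clause.vars

def clausesVars (M : Multiset (Clause V)) : Finset V := (M.map Clause.vars).sup

structure IsPJT (φ : Finset (Clause V)) (t : PJT V) : Prop where
  clauses_eq : t.clauses = φ.val
  cover : t.P = Formula.vars φ
  disjoint_labels : (t.labels.map Finset.card).sum = (Formula.vars φ).card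
  descend : ∀ lbl cs, PJT.Subtree (.node lbl cs) t →
    ∀ c ∈ φ, ∀ x ∈ lbl, x ∈ c.vars → c ∈ PJT.clauses (.node lbl cs)

/-! Distinct children `o`, `q` of a node carry disjoint multisets of clauses, since the clauses of
the whole tree form the duplicate-free multiset `φ`. A variable `x ∈ P(o)` lies in a label below
`o`, so by the descent condition every clause mentioning `x` sits below `o`, hence not below `q`.
Finally, labels in different subtrees are disjoint because the cardinalities of all labels add up
to the cardinality of their union `P(r) = vars φ`. -/

section ListSum

variable {ι M : Type*} [AddCommMonoid M] [PartialOrder M] [CanonicallyOrderedAdd M]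

theorem List.get_add_get_le_sum_map (l : List ι) (f : ι → M) {i j : Fin l.length}
    (hij : i ≠ j) : f (l.get i) + f (l.get j) ≤ (l.map f).sum := by
  simp only [List.get_eq_getElem]
  rw [← Fin.sum_univ_fun_getElem, ← Finset.sum_pair (f := fun k : Fin l.length => f l[k.1]) hij]
  exact Finset.sum_le_sum_of_subset (Finset.subset_univ _)

end ListSum

section FinsetMultiset

variable {α : Type*} [DecidableEq α]

theorem Multiset.mem_sup_finset {M : Multiset (Finset α)} {x : α} :
    x ∈ M.sup ↔ ∃ s ∈ M, x ∈ s := by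
  induction M using Multiset.induction with
  | empty => simp
  | cons a M ih => simp [ih]

theorem Multiset.card_sup_le_sum_card (M : Multiset (Finset α)) :
    M.sup.card ≤ (M.map Finset.card).sum := by
  induction M using Multiset.induction with
  | empty => simp
  | cons a M ih =>
    rw [Multiset.sup_cons, Multiset.map_cons, Multiset.sum_cons]
    exact (Finset.card_union_le _ _).trans (Nat.add_le_add_left ih _)

theorem Multiset.disjoint_sup_of_add_le {M₁ M₂ M : Multiset (Finset α)} (h : M₁ + M₂ ≤ M)
    (hM : (M.map Finset.card).sum ≤ M.sup.card) : Disjoint M₁.sup M₂.sup := by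
  obtain ⟨R, rfl⟩ := Multiset.le_iff_exists_add.mp h
  have hunion : (M₁ + M₂ + R).sup.card ≤ (M₁.sup ∪ M₂.sup).card + R.sup.card := by
    rw [Multiset.sup_add, Multiset.sup_add]
    exact Finset.card_union_le _ _
  have h₁ := card_sup_le_sum_card M₁
  have h₂ := card_sup_le_sum_card M₂
  have hR := card_sup_le_sum_card R
  have hle := Finset.card_union_le M₁.sup M₂.sup
  simp only [Multiset.map_add, Multiset.sum_add] at hM
  exact Finset.card_union_eq_card_add_card.mp (by omega)

theorem Multiset.sup_list_sum {β : Type*} [SemilatticeSup β] [OrderBot β]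
    (L : List (Multiset β)) : L.sum.sup = ((L.map Multiset.sup : List β) : Multiset β).sup := by
  induction L with
  | nil => simp
  | cons a L ih => simp [Multiset.sup_add, ih]

end FinsetMultiset

section Trees

variable {α : Type*}

theorem mem_clausesVars [DecidableEq α] {M : Multiset (Clause α)} {x : α} :
    x ∈ clausesVars M ↔ ∃ c ∈ M, x ∈ c.vars := by
  simp [clausesVars, Multiset.mem_sup_finset]

namespace PJT

theorem Subtree.trans {a b c : PJT α} (hab : Subtree a b) (hbc : Subtree b c) : Subtree a c := by
  induction hbc with
  | refl => exact hab
  | child hc _ ih => exact .child hc ih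

theorem Subtree.of_mem {c : PJT α} {lbl : Finset α} {cs : List (PJT α)} (hc : c ∈ cs) :
    Subtree c (.node lbl cs) :=
  .child hc (.refl c)

theorem clauses_node (lbl : Finset α) (cs : List (PJT α)) :
    (node lbl cs).clauses = (cs.map clauses).sum := by
  rw [clauses, List.attach_map_val]

theorem labels_node (lbl : Finset α) (cs : List (PJT α)) :
    (node lbl cs).labels = lbl ::ₘ (cs.map labels).sum := by
  rw [labels, List.attach_map_val]

theorem P_node [DecidableEq α] (lbl : Finset α) (cs : List (PJT α)) :
    (node lbl cs).P = lbl ∪ ((cs.map P : List (Finset α)) : Multiset (Finset α)).sup := by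
  rw [P, List.attach_map_val, Multiset.sup_coe]
  rfl

theorem clauses_le_of_subtree {s t : PJT α} (hst : Subtree s t) : s.clauses ≤ t.clauses := by
  induction hst with
  | refl => exact le_rfl
  | child hc _ ih =>
    rw [clauses_node]
    exact ih.trans (List.le_sum_of_mem (List.mem_map_of_mem hc))

theorem labels_le_of_subtree {s t : PJT α} (hst : Subtree s t) : s.labels ≤ t.labels := by
  induction hst with
  | refl => exact le_rfl
  | child hc _ ih =>
    rw [labels_node]
    exact ih.trans
      ((List.le_sum_of_mem (List.mem_map_of_mem hc)).trans (Multiset.le_cons_self _ _))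

theorem clauses_get_add_get_le (lbl : Finset α) (cs : List (PJT α)) {i j : Fin cs.length}
    (hij : i ≠ j) : (cs.get i).clauses + (cs.get j).clauses ≤ (node lbl cs).clauses := by
  rw [clauses_node]
  exact cs.get_add_get_le_sum_map clauses hij

theorem labels_get_add_get_le (lbl : Finset α) (cs : List (PJT α)) {i j : Fin cs.length}
    (hij : i ≠ j) : (cs.get i).labels + (cs.get j).labels ≤ (node lbl cs).labels := by
  rw [labels_node]
  exact (cs.get_add_get_le_sum_map labels hij).trans (Multiset.le_cons_self _ _)

theorem exists_subtree_of_mem_P [DecidableEq α] {x : α} (t : PJT α) (hx : x ∈ t.P) :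
    ∃ lbl cs, Subtree (node lbl cs) t ∧ x ∈ lbl := by
  induction t using P.induct with
  | case1 c => simp [P] at hx
  | case2 lbl cs ih =>
    rcases Finset.mem_union.mp ((P_node lbl cs) ▸ hx) with hx | hx
    · exact ⟨lbl, cs, .refl _, hx⟩
    · obtain ⟨_, ho, hxo⟩ := Multiset.mem_sup_finset.mp hx
      obtain ⟨o, hocs, rfl⟩ := List.mem_map.mp ho
      obtain ⟨lbl', cs', hsub, hx'⟩ := ih ⟨o, hocs⟩ hxo
      exact ⟨lbl', cs', hsub.trans (.of_mem hocs), hx'⟩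

theorem P_eq_sup_labels [DecidableEq α] (t : PJT α) : t.P = t.labels.sup := by
  induction t using P.induct with
  | case1 c => simp [P, labels]
  | case2 lbl cs ih =>
    rw [P_node, labels_node, Multiset.sup_cons, Multiset.sup_list_sum, List.map_map]
    congr 3
    exact List.map_congr_left fun o ho => ih ⟨o, ho⟩

end PJT

namespace IsPJT

variable [DecidableEq α] {φ : Finset (Clause α)} {t s₁ s₂ : PJT α}

theorem mem_of_mem_clauses (h : IsPJT φ t) {s : PJT α} (hs : PJT.Subtree s t) {c : Clause α}
    (hc : c ∈ s.clauses) : c ∈ φ := by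
  have := Multiset.mem_of_le (PJT.clauses_le_of_subtree hs) hc
  rwa [h.clauses_eq] at this

theorem mem_clauses_of_mem_P (h : IsPJT φ t) {s : PJT α} (hs : PJT.Subtree s t) {x : α}
    (hx : x ∈ s.P) {c : Clause α} (hc : c ∈ φ) (hxc : x ∈ c.vars) : c ∈ s.clauses := by
  obtain ⟨lbl, cs, hsub, hxl⟩ := PJT.exists_subtree_of_mem_P s hx
  exact Multiset.mem_of_le (PJT.clauses_le_of_subtree hsub)
    (h.descend lbl cs (hsub.trans hs) c hc x hxl hxc)

theorem disjoint_clauses_of_add_le (h : IsPJT φ t)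
    (hle : s₁.clauses + s₂.clauses ≤ t.clauses) :
    Disjoint s₁.clauses s₂.clauses :=
  (Multiset.nodup_add.mp (Multiset.nodup_of_le hle (h.clauses_eq ▸ φ.nodup))).2.2

theorem disjoint_P_clausesVars (h : IsPJT φ t) (hs₁ : PJT.Subtree s₁ t)
    (hs₂ : PJT.Subtree s₂ t) (hdisj : Disjoint s₁.clauses s₂.clauses) :
    Disjoint s₁.P (clausesVars s₂.clauses) := by
  rw [Finset.disjoint_left]
  intro x hx₁ hx₂
  obtain ⟨c, hc₂, hxc⟩ := mem_clausesVars.mp hx₂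
  have hc₁ := h.mem_clauses_of_mem_P hs₁ hx₁ (h.mem_of_mem_clauses hs₂ hc₂) hxc
  exact Multiset.disjoint_left.mp hdisj hc₁ hc₂

theorem sum_card_labels_le (h : IsPJT φ t) :
    (t.labels.map Finset.card).sum ≤ t.labels.sup.card := by
  rw [h.disjoint_labels, ← h.cover, PJT.P_eq_sup_labels]

theorem disjoint_P_of_labels_add_le (h : IsPJT φ t)
    (hle : s₁.labels + s₂.labels ≤ t.labels) :
    Disjoint s₁.P s₂.P := by
  rw [PJT.P_eq_sup_labels, PJT.P_eq_sup_labels]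
  exact Multiset.disjoint_sup_of_add_le hle h.sum_card_labels_le

end IsPJT

end Trees

/-- In a project-join tree of `φ`, if `n` is an internal node with distinct
children `o` and `q`, then `P(o) ∩ vars(Φ(q) · W_{P(q)}) = ∅`, where
`vars(Φ(q) · W_{P(q)}) = vars(Φ(q)) ∪ P(q)`. -/
theorem pjt_sibling_disjoint {V : Type*} [DecidableEq V]
    (φ : Finset (Clause V)) (t : PJT V) (h : IsPJT φ t)
    (lbl : Finset V) (cs : List (PJT V)) (hs : PJT.Subtree (.node lbl cs) t)
    (i j : Fin cs.length) (hij : i ≠ j) :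
    Disjoint (cs.get i).P (clausesVars (cs.get j).clauses ∪ (cs.get j).P) := by
  have hsub : ∀ k, PJT.Subtree (cs.get k) t := fun k =>
    (PJT.Subtree.of_mem (List.get_mem cs k)).trans hs
  rw [Finset.disjoint_union_right]
  refine ⟨h.disjoint_P_clausesVars (hsub i) (hsub j) (h.disjoint_clauses_of_add_le ?_),
    h.disjoint_P_of_labels_add_le ?_⟩
  · exact (PJT.clauses_get_add_get_le lbl cs hij).trans (PJT.clauses_le_of_subtree hs)
  · exact (PJT.labels_get_add_get_le lbl cs hij).trans (PJT.labels_le_of_subtree hs)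
end

section
/- Running intersection separates labels: in a project-join tree constructed so that π(a) ⊆ χ(O(a)) for a mapping O into a tree decomposition (S, χ) of the Gaifman graph, if distinct internal nodes a, b satisfied x ∈ π(a) ∩ π(b), then x would lie in the bag of some node on the path between O(a) and O(b) in S that is a parent of O(a) or O(b); combined with π(a) ∩ χ(parent(O(a))) = ∅ this yields a contradiction, so the sets π(a) are pairwise disjoint. -/
/-- A tree whose nodes carry bags of vertices (a candidate tree decomposition). -/
inductive BTree (α : Type*) where
  | node (bag : Finset α) (children : List (BTree α))

/-- The subtree at a position (a path of child indices). -/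
def BTree.subAt {α : Type*} : BTree α → List ℕ → Option (BTree α)
  | t, [] => some t
  | .node _ cs, i :: p =>
    match h : cs[i]? with
    | some c => BTree.subAt c p
    | none => none
termination_by t _ => sizeOf t
decreasing_by
  obtain ⟨hi, rfl⟩ := List.getElem?_eq_some_iff.mp h
  have := List.sizeOf_lt_of_mem (List.getElem_mem hi)
  simp only [BTree.node.sizeOf_spec]
  omega

/-- The bag of the root of a tree. -/
def BTree.rootBag {α : Type*} : BTree α → Finset α
  | .node b _ => b

/-- The bag at a position, if the position is valid. -/
def BTree.bagAt {α : Type*} (t : BTree α) (p : List ℕ) : Option (Finset α) :=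
  (t.subAt p).map BTree.rootBag

/-- Running intersection (connectivity) property: for every vertex `x`, the
positions whose bags contain `x` form a connected subtree: there is a top
position such that every position containing `x` lies below it and all
positions in between also contain `x`. -/
def BTree.Connected {α : Type*} (t : BTree α) : Prop :=
  ∀ x : α, (∃ p b, t.bagAt p = some b ∧ x ∈ b) →
    ∃ top : List ℕ, ∀ p b, t.bagAt p = some b → x ∈ b →
      top <+: p ∧ ∀ m, top <+: m → m <+: p → ∃ b', t.bagAt m = some b' ∧ x ∈ b'

/-
If `x` lay in the labels of two internal nodes `a ≠ b`, it would lie in the bags at the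
distinct positions `O a`, `O b`. By running intersection these lie below a common top
position and every position in between holds `x` as well; one of `O a`, `O b` differs from
the top, so its parent position is in between and its bag contains `x`, contradicting the
disjointness of that node's label from its parent bag.
-/

theorem List.IsPrefix.prefix_dropLast_of_ne {α : Type*} {l₁ l₂ : List α} (h : l₁ <+: l₂)
    (hne : l₁ ≠ l₂) : l₁ <+: l₂.dropLast := by
  obtain ⟨t, rfl⟩ := h
  have ht : t ≠ [] := by rintro rfl; simp at hne
  rw [List.dropLast_append_of_ne_nil ht]
  exact List.prefix_append _ _

namespace BTree

variable {α : Type*} {t : BTree α}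

theorem exists_bagAt_eq_some {p : List ℕ} (h : (t.subAt p).isSome) :
    ∃ b, t.bagAt p = some b :=
  Option.isSome_iff_exists.mp (by simpa [bagAt] using h)

theorem mem_bagAt_dropLast_of_ne_top {x : α} {top : List ℕ}
    (htop : ∀ p b, t.bagAt p = some b → x ∈ b →
      top <+: p ∧ ∀ m, top <+: m → m <+: p → ∃ b', t.bagAt m = some b' ∧ x ∈ b')
    {p : List ℕ} {b : Finset α} (hb : t.bagAt p = some b) (hx : x ∈ b) (hp : p ≠ top) :
    p ≠ [] ∧ ∃ b', t.bagAt p.dropLast = some b' ∧ x ∈ b' := by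
  obtain ⟨htop_p, hbetween⟩ := htop p b hb hx
  refine ⟨?_, hbetween _ (htop_p.prefix_dropLast_of_ne (Ne.symm hp)) p.dropLast_prefix⟩
  rintro rfl
  exact hp (List.prefix_nil.mp htop_p).symm

theorem Connected.exists_mem_bagAt_dropLast (hconn : t.Connected) {x : α} {p q : List ℕ}
    {b c : Finset α} (hb : t.bagAt p = some b) (hc : t.bagAt q = some c) (hxb : x ∈ b)
    (hxc : x ∈ c) (hpq : p ≠ q) :
    ∃ r, (r = p ∨ r = q) ∧ r ≠ [] ∧ ∃ b', t.bagAt r.dropLast = some b' ∧ x ∈ b' := by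
  obtain ⟨top, htop⟩ := hconn x ⟨p, b, hb, hxb⟩
  by_cases hp : p = top
  · exact ⟨q, .inr rfl, mem_bagAt_dropLast_of_ne_top htop hc hxc (hp ▸ hpq.symm)⟩
  · exact ⟨p, .inl rfl, mem_bagAt_dropLast_of_ne_top htop hb hxb hp⟩

end BTree

theorem labels_pairwise_disjoint_general {V : Type*} {ι : Type*}
    (S : BTree V) (hconn : S.Connected)
    (π : ι → Finset V) (O : ι → List ℕ)
    (hvalid : ∀ a : ι, (S.subAt (O a)).isSome)
    (hinj : Function.Injective O)
    (hsub : ∀ (a : ι) (b : Finset V), S.bagAt (O a) = some b → π a ⊆ b)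
    (hparent : ∀ (a : ι), O a ≠ [] →
      ∀ b : Finset V, S.bagAt (O a).dropLast = some b → Disjoint (π a) b) :
    ∀ a b : ι, a ≠ b → Disjoint (π a) (π b) := by
  intro a b hab
  rw [Finset.disjoint_left]
  intro x hxa hxb
  obtain ⟨ba, hba⟩ := BTree.exists_bagAt_eq_some (hvalid a)
  obtain ⟨bb, hbb⟩ := BTree.exists_bagAt_eq_some (hvalid b)
  obtain ⟨r, hr, hr_ne, b', hb', hxb'⟩ := hconn.exists_mem_bagAt_dropLast hba hbb
    (hsub a ba hba hxa) (hsub b bb hbb hxb) (hinj.ne hab)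
  rcases hr with rfl | rfl
  · exact Finset.disjoint_left.mp (hparent a hr_ne b' hb') hxa hxb'
  · exact Finset.disjoint_left.mp (hparent b hr_ne b' hb') hxb hxb'

/-- Running intersection separates labels: if `S` is a tree decomposition
(satisfying the running intersection property) and each internal node `a` of a
project-join tree is mapped to a distinct decomposition node `O(a)` with
`π(a) ⊆ χ(O(a))` and, whenever `O(a)` is not the root,
`π(a) ∩ χ(parent(O(a))) = ∅`, then the sets `π(a)` are pairwise disjoint. -/
theorem labels_pairwise_disjoint {V : Type*} [DecidableEq V] {ι : Type*}
    (S : BTree V) (hconn : S.Connected)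
    (π : ι → Finset V) (O : ι → List ℕ)
    (hvalid : ∀ a : ι, (S.subAt (O a)).isSome)
    (hinj : Function.Injective O)
    (hsub : ∀ (a : ι) (b : Finset V), S.bagAt (O a) = some b → π a ⊆ b)
    (hparent : ∀ (a : ι), O a ≠ [] →
      ∀ b : Finset V, S.bagAt (O a).dropLast = some b → Disjoint (π a) b) :
    ∀ a b : ι, a ≠ b → Disjoint (π a) (π b) :=
  labels_pairwise_disjoint_general S hconn π O hvalid hinj hsub hparent
end
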